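/- Let S_T be a symmetric positive definite (K+1)×(K+1) real matrix and S_B a symmetric positive semi-definite (K+1)×(K+1) real matrix, written in block form S_T = [[T_x, t_x],[t_xᵀ, t_z]] and S_B = [[B_x, b_x],[b_xᵀ, b_z]] where T_x, B_x are K×K. Then trace(S_T⁻¹ S_B) ≥ trace(T_x⁻¹ B_x). In other words, Pillai's trace is non-decreasing when a new variable is added. -/

import Mathlib

/-! By the Schur-complement formula, the inverse of `S = [[A, B], [Bᴴ, D]]` is the zero-padded
`A⁻¹` plus `U s⁻¹ Uᴴ`, where `s = D - Bᴴ A⁻¹ B` is the (positive definite) Schur complement and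
`U = [[-A⁻¹ B], [1]]`. So `S⁻¹` dominates `A⁻¹ ⊕ 0` in the Loewner order, and pairing with a
positive semidefinite `M` is monotone because the trace of a product of positive semidefinite
matrices is nonnegative. -/

open scoped ComplexOrder MatrixOrder

namespace Matrix

variable {m n : Type*}

theorem trace_fromBlocks [Fintype m] [Fintype n] {α : Type*} [AddCommMonoid α]
    (A : Matrix m m α) (B : Matrix m n α) (C : Matrix n m α) (D : Matrix n n α) :
    (fromBlocks A B C D).trace = A.trace + D.trace := by
  simp [trace, Fintype.sum_sum_type]

theorem inv_fromBlocks_eq_add_of_isUnit [Fintype m] [Fintype n] [DecidableEq m] [DecidableEq n]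
    {α : Type*} [CommRing α] {A : Matrix m m α} (B : Matrix m n α) (C : Matrix n m α)
    (D : Matrix n n α) (hA : IsUnit A) (hS : IsUnit (D - C * A⁻¹ * B)) :
    (fromBlocks A B C D)⁻¹ = fromBlocks A⁻¹ 0 0 0 +
      fromRows (-(A⁻¹ * B)) 1 * (D - C * A⁻¹ * B)⁻¹ * fromCols (-(C * A⁻¹)) 1 := by
  let := hA.invertible
  let : Invertible (D - C * ⅟A * B) := by rw [invOf_eq_nonsing_inv]; exact hS.invertible
  let := fromBlocks₁₁Invertible A B C D
  rw [← invOf_eq_nonsing_inv, invOf_fromBlocks₁₁_eq, fromRows_mul, fromRows_mul_fromCols,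
    fromBlocks_add]
  simp [invOf_eq_nonsing_inv, Matrix.mul_assoc]

theorem PosDef.toBlocks₁₁ {R : Type*} [Ring R] [PartialOrder R] [StarRing R]
    {M : Matrix (m ⊕ n) (m ⊕ n) R} (hM : M.PosDef) : M.toBlocks₁₁.PosDef :=
  hM.submatrix Sum.inl_injective

variable [Fintype m] [Fintype n] [DecidableEq m] [DecidableEq n] {𝕜 : Type*} [RCLike 𝕜]

theorem PosSemidef.trace_mul_nonneg {A B : Matrix n n 𝕜} (hA : A.PosSemidef) (hB : B.PosSemidef) :
    0 ≤ (A * B).trace := by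
  obtain ⟨R, rfl⟩ := CStarAlgebra.nonneg_iff_eq_star_mul_self.mp hA.nonneg
  rw [star_eq_conjTranspose, Matrix.mul_assoc, trace_mul_comm, Matrix.mul_assoc,
    ← Matrix.mul_assoc]
  exact (hB.mul_mul_conjTranspose_same R).trace_nonneg

theorem trace_mul_le_trace_mul_of_le {A A' M : Matrix n n 𝕜} (h : A ≤ A') (hM : M.PosSemidef) :
    (A * M).trace ≤ (A' * M).trace := by
  rw [← sub_nonneg, ← trace_sub, ← Matrix.sub_mul]
  exact PosSemidef.trace_mul_nonneg h hM

theorem PosDef.schur_complement_of_fromBlocks {A : Matrix m m 𝕜} {B : Matrix m n 𝕜}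
    {D : Matrix n n 𝕜} (hS : (fromBlocks A B Bᴴ D).PosDef) : (D - Bᴴ * A⁻¹ * B).PosDef := by
  have hA : A.PosDef := by simpa using hS.toBlocks₁₁
  let := hA.isUnit.invertible
  have hPSD := (PosDef.fromBlocks₁₁ B D hA).mp hS.posSemidef
  refine hPSD.posDef_iff_det_ne_zero.mpr fun h ↦ hS.det_pos.ne' ?_
  rw [det_fromBlocks₁₁, invOf_eq_nonsing_inv, h, mul_zero]

theorem PosDef.fromBlocks_inv_zero_le_inv {A : Matrix m m 𝕜} {B : Matrix m n 𝕜}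
    {D : Matrix n n 𝕜} (hS : (fromBlocks A B Bᴴ D).PosDef) :
    fromBlocks A⁻¹ 0 0 0 ≤ (fromBlocks A B Bᴴ D)⁻¹ := by
  have hA : A.PosDef := by simpa using hS.toBlocks₁₁
  have hSchur := hS.schur_complement_of_fromBlocks
  have hU : (fromRows (-(A⁻¹ * B)) (1 : Matrix n n 𝕜))ᴴ = fromCols (-(Bᴴ * A⁻¹)) 1 := by
    simp [conjTranspose_fromRows_eq_fromCols_conjTranspose, hA.isHermitian.inv.eq]
  rw [le_iff, inv_fromBlocks_eq_add_of_isUnit B Bᴴ D hA.isUnit hSchur.isUnit, add_sub_cancel_left,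
    ← hU]
  exact hSchur.inv.posSemidef.mul_mul_conjTranspose_same _

end Matrix

open Matrix

/-- Pillai's trace is non-decreasing when a new variable is added:
if `S_T = [[T_x, t_x],[t_xᵀ, t_z]]` is positive definite and
`S_B = [[B_x, b_x],[b_xᵀ, b_z]]` is positive semi-definite, then
`trace(S_T⁻¹ S_B) ≥ trace(T_x⁻¹ B_x)`. -/
theorem pillai_trace_nondecreasing (K : ℕ)
    (Tx Bx : Matrix (Fin K) (Fin K) ℝ)
    (tx bx : Matrix (Fin K) (Fin 1) ℝ)
    (tz bz : Matrix (Fin 1) (Fin 1) ℝ)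
    (hT : (Matrix.fromBlocks Tx tx txᵀ tz).PosDef)
    (hB : (Matrix.fromBlocks Bx bx bxᵀ bz).PosSemidef) :
    Matrix.trace (Tx⁻¹ * Bx) ≤
      Matrix.trace ((Matrix.fromBlocks Tx tx txᵀ tz)⁻¹ *
        Matrix.fromBlocks Bx bx bxᵀ bz) := by
  have hS : (fromBlocks Tx tx txᴴ tz).PosDef := by rwa [conjTranspose_eq_transpose_of_trivial]
  calc Matrix.trace (Tx⁻¹ * Bx)
      = Matrix.trace (fromBlocks Tx⁻¹ 0 0 0 * fromBlocks Bx bx bxᵀ bz) := by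
        simp [fromBlocks_multiply, trace_fromBlocks]
    _ ≤ _ := trace_mul_le_trace_mul_of_le hS.fromBlocks_inv_zero_le_inv hB
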